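/- On Ω = (−1,1)², let v₁(x,y) = cos(πx/2)·sin(πy) and v₂(x,y) = cos(πy/2)·sin(πx). Then P(α) := ∫_Ω |v₁ + α v₂|²·(v₁ + α v₂)·(α v₁ − v₂) dx dy = (3/16)·(α³ − α) for all real α, whose simple roots are α = 0, 1, −1. -/

import Mathlib

/-!
Both eigenfunctions are tensor products, `v₁ = c ⊗ s` and `v₂ = s ⊗ c` with
`c t = cos (π t / 2)` and `s t = sin (π t)`, so every quartic moment `∫ v₁ ^ i * v₂ ^ j`
over the square is the product `m i j * m j i` of one-dimensional moments
`m i j = ∫ c ^ i * s ^ j`. As `c` is even and `s` is odd, `m i j = 0` for odd `j`; the even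
moments follow from the Wallis recursion: `m 4 0 = m 0 4 = 3 / 4` and `m 2 2 = 1 / 2`.
Expanding `(v₁ + α v₂)³ (α v₁ - v₂)` therefore leaves
`P(α) = (α³ - α) (3 m 2 2 ^ 2 - m 4 0 * m 0 4) = (3 / 16) (α³ - α)`.
-/

open Real Set MeasureTheory intervalIntegral

theorem intervalIntegral_neg_self_eq_zero_of_odd {E : Type*} [NormedAddCommGroup E]
    [NormedSpace ℝ E] {f : ℝ → E} (hf : ∀ x, f (-x) = -f x) (a : ℝ) :
    ∫ x in -a..a, f x = 0 := by
  have h := integral_comp_neg (a := -a) (b := a) f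
  simp only [hf, intervalIntegral.integral_neg, neg_neg, neg_eq_iff_add_eq_zero,
    ← two_smul ℝ] at h
  exact (smul_eq_zero.mp h).resolve_left two_ne_zero

theorem intervalIntegral_comp_mul_left_neg_one_one {E : Type*} [NormedAddCommGroup E]
    [NormedSpace ℝ E] (f : ℝ → E) {c : ℝ} (hc : c ≠ 0) :
    ∫ t in (-1 : ℝ)..1, f (c * t) = c⁻¹ • ∫ u in -c..c, f u := by
  simpa using integral_comp_mul_left f hc (a := -1) (b := 1)

theorem integral_cos_pow_add_two_neg_pi_div_two (n : ℕ) :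
    ∫ x in -(π / 2)..π / 2, cos x ^ (n + 2) =
      (n + 1) / (n + 2) * ∫ x in -(π / 2)..π / 2, cos x ^ n := by
  simp [integral_cos_pow]

theorem integral_sin_pow_add_two_neg_pi (n : ℕ) :
    ∫ x in -π..π, sin x ^ (n + 2) = (n + 1) / (n + 2) * ∫ x in -π..π, sin x ^ n := by
  simp [integral_sin_pow]

theorem Continuous.integrableOn_Ioo_prod_Ioo {E : Type*} [NormedAddCommGroup E]
    {f : ℝ × ℝ → E} (hf : Continuous f) (a b c d : ℝ) :
    IntegrableOn f (Ioo a b ×ˢ Ioo c d) := by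
  refine (hf.integrableOn_Icc (a := (a, c)) (b := (b, d))).mono_set ?_
  rw [← Icc_prod_Icc]
  exact prod_mono Ioo_subset_Icc_self Ioo_subset_Icc_self

theorem integral_add_mul_pow_three_mul_sub {Ω : Type*} [MeasurableSpace Ω] {μ : Measure Ω}
    {f g : Ω → ℝ} (h : ∀ i j : ℕ, Integrable (fun x => f x ^ i * g x ^ j) μ) (α : ℝ) :
    ∫ x, (f x + α * g x) ^ 3 * (α * f x - g x) ∂μ =
      α * ∫ x, f x ^ 4 * g x ^ 0 ∂μ + (3 * α ^ 2 - 1) * ∫ x, f x ^ 3 * g x ^ 1 ∂μ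
        + (3 * α ^ 3 - 3 * α) * ∫ x, f x ^ 2 * g x ^ 2 ∂μ
        + (α ^ 4 - 3 * α ^ 2) * ∫ x, f x ^ 1 * g x ^ 3 ∂μ
        - α ^ 3 * ∫ x, f x ^ 0 * g x ^ 4 ∂μ := by
  have hexpand : ∀ x, (f x + α * g x) ^ 3 * (α * f x - g x) =
      α * (f x ^ 4 * g x ^ 0) + (3 * α ^ 2 - 1) * (f x ^ 3 * g x ^ 1)
        + (3 * α ^ 3 - 3 * α) * (f x ^ 2 * g x ^ 2)
        + (α ^ 4 - 3 * α ^ 2) * (f x ^ 1 * g x ^ 3) - α ^ 3 * (f x ^ 0 * g x ^ 4) :=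
    fun x => by ring
  simp_rw [hexpand]
  rw [MeasureTheory.integral_sub, MeasureTheory.integral_add, MeasureTheory.integral_add,
    MeasureTheory.integral_add]
  · simp only [MeasureTheory.integral_const_mul]
  all_goals fun_prop

namespace BifurcationSquare

noncomputable def v₁ (p : ℝ × ℝ) : ℝ := cos (π * p.1 / 2) * sin (π * p.2)

noncomputable def v₂ (p : ℝ × ℝ) : ℝ := cos (π * p.2 / 2) * sin (π * p.1)

noncomputable def moment (i j : ℕ) : ℝ :=
  ∫ t in (-1 : ℝ)..1, cos (π * t / 2) ^ i * sin (π * t) ^ j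

theorem moment_eq_zero_of_odd (i : ℕ) {j : ℕ} (hj : Odd j) : moment i j = 0 :=
  intervalIntegral_neg_self_eq_zero_of_odd
    (fun t => by simp [mul_neg, neg_div, cos_neg, sin_neg, hj.neg_pow]) 1

theorem moment_four_zero : moment 4 0 = 3 / 4 := by
  simp only [moment, pow_zero, mul_one, mul_div_right_comm π _ 2]
  rw [intervalIntegral_comp_mul_left_neg_one_one (fun u => cos u ^ 4) (by positivity),
    integral_cos_pow_add_two_neg_pi_div_two 2, integral_cos_pow_add_two_neg_pi_div_two 0]
  simp only [pow_zero, intervalIntegral.integral_const, smul_eq_mul, mul_one]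
  field_simp
  norm_num

theorem moment_zero_four : moment 0 4 = 3 / 4 := by
  simp only [moment, pow_zero, one_mul]
  rw [intervalIntegral_comp_mul_left_neg_one_one (fun u => sin u ^ 4) pi_ne_zero,
    integral_sin_pow_add_two_neg_pi 2, integral_sin_pow_add_two_neg_pi 0]
  simp only [pow_zero, intervalIntegral.integral_const, smul_eq_mul, mul_one]
  field_simp
  norm_num

theorem moment_two_two : moment 2 2 = 1 / 2 := by
  have hcos_sq_mul_sin_sq : ∀ t, cos (π * t / 2) ^ 2 * sin (π * t) ^ 2 =
      4 * (cos (π / 2 * t) ^ (2 + 2) - cos (π / 2 * t) ^ (4 + 2)) := by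
    intro t
    rw [mul_div_right_comm π _ 2, show π * t = 2 * (π / 2 * t) by ring, sin_two_mul]
    linear_combination 4 * cos (π / 2 * t) ^ 4 * sin_sq_add_cos_sq (π / 2 * t)
  have hcos : ∀ n : ℕ, IntervalIntegrable (fun u => cos u ^ n) volume (-(π / 2)) (π / 2) :=
    fun n => (continuous_cos.pow n).intervalIntegrable _ _
  simp only [moment, hcos_sq_mul_sin_sq]
  rw [intervalIntegral_comp_mul_left_neg_one_one
      (fun u => 4 * (cos u ^ (2 + 2) - cos u ^ (4 + 2))) (by positivity),
    intervalIntegral.integral_const_mul, integral_sub (hcos _) (hcos _),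
    integral_cos_pow_add_two_neg_pi_div_two 4, integral_cos_pow_add_two_neg_pi_div_two 2,
    integral_cos_pow_add_two_neg_pi_div_two 0]
  simp only [pow_zero, intervalIntegral.integral_const, smul_eq_mul, mul_one]
  field_simp
  norm_num

theorem integral_v₁_pow_mul_v₂_pow (i j : ℕ) :
    ∫ p in Ioo (-1 : ℝ) 1 ×ˢ Ioo (-1 : ℝ) 1, v₁ p ^ i * v₂ p ^ j =
      moment i j * moment j i := by
  have hsplit : ∀ p : ℝ × ℝ, v₁ p ^ i * v₂ p ^ j =
      (cos (π * p.1 / 2) ^ i * sin (π * p.1) ^ j) *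
        (cos (π * p.2 / 2) ^ j * sin (π * p.2) ^ i) := by
    intro p
    simp only [v₁, v₂]
    ring
  simp_rw [hsplit]
  rw [Measure.volume_eq_prod,
    setIntegral_prod_mul (fun t => cos (π * t / 2) ^ i * sin (π * t) ^ j)
      (fun t => cos (π * t / 2) ^ j * sin (π * t) ^ i), moment, moment,
    integral_of_le (by norm_num), integral_of_le (by norm_num), integral_Ioc_eq_integral_Ioo,
    integral_Ioc_eq_integral_Ioo]

end BifurcationSquare

open BifurcationSquare

/-- Explicit computation of the bifurcation function `P` for `σ₁ = 2` on the square
`(−1,1)²`: `P(α) = (3/16)(α³ − α)`, whose simple roots are `0, 1, −1`. -/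
theorem bifurcation_function_square :
    ∀ α : ℝ,
      (∫ p in (Set.Ioo (-1 : ℝ) 1) ×ˢ (Set.Ioo (-1 : ℝ) 1),
        ((Real.cos (π * p.1 / 2) * Real.sin (π * p.2)
            + α * (Real.cos (π * p.2 / 2) * Real.sin (π * p.1))) ^ 3 *
          (α * (Real.cos (π * p.1 / 2) * Real.sin (π * p.2))
            - Real.cos (π * p.2 / 2) * Real.sin (π * p.1)))) =
        3 / 16 * (α ^ 3 - α) ∧
      (3 / 16 * (α ^ 3 - α) = 0 ↔ α = 0 ∨ α = 1 ∨ α = -1) := by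
  intro α
  constructor
  · change ∫ p in Ioo (-1 : ℝ) 1 ×ˢ Ioo (-1 : ℝ) 1,
      (v₁ p + α * v₂ p) ^ 3 * (α * v₁ p - v₂ p) = _
    have hint : ∀ i j : ℕ, IntegrableOn (fun p => v₁ p ^ i * v₂ p ^ j)
        (Ioo (-1 : ℝ) 1 ×ˢ Ioo (-1 : ℝ) 1) :=
      fun i j => Continuous.integrableOn_Ioo_prod_Ioo (by unfold v₁ v₂; fun_prop) _ _ _ _
    simp only [integral_add_mul_pow_three_mul_sub hint, integral_v₁_pow_mul_v₂_pow,
      moment_four_zero, moment_zero_four, moment_two_two,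
      moment_eq_zero_of_odd _ odd_one, moment_eq_zero_of_odd _ (by decide : Odd 3)]
    ring
  · rw [show 3 / 16 * (α ^ 3 - α) = 3 / 16 * (α * ((α - 1) * (α + 1))) by ring]
    simp [sub_eq_zero, add_eq_zero_iff_eq_neg]
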